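/- arXiv:2402.14347 — 4 statements merged into one kernel-verified Lean document; each statement's English description precedes it below -/
import Mathlib

section
/- For every pair of real numbers (λ, μ), the dual quaternion polynomial identity C = (t - k - ε((1-μ)j - λi)) · (t + k - ε(λi + μj)) holds, where C = t² + 1 - ε(jt + i). In particular, C admits a two-parameter family of factorizations into linear factors. -/
/-!
Since `X` is central, `(X - a) * (X - b) = X² - (a + b) X + a b` over any ring, so it suffices
that the two roots sum to `ε j` and multiply to `1 - ε i`. Writing the roots as `k + ε p` and
`-k + ε q`, the product is `-k² + ε (k q - p k)`, and `k q - p k = -i` follows from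
`k i = j`, `k j = -i`, `i k = -j`, `j k = i`.
-/

open Polynomial TrivSqZeroExt

noncomputable section

/-- The dual quaternions ℍ[ε], ε central with ε² = 0. -/
abbrev DH := DualNumber (Quaternion ℝ)

def qi : Quaternion ℝ := ⟨0,1,0,0⟩
def qj : Quaternion ℝ := ⟨0,0,1,0⟩
def qk : Quaternion ℝ := ⟨0,0,0,1⟩

def ε : DH := DualNumber.eps

/-- Dual quaternion conjugation: quaternion conjugation extended ℝ[ε]-linearly. -/
def dconj (q : DH) : DH := ⟨star q.fst, star q.snd⟩

/-- The circular translation polynomial C = t² + 1 - ε(jt + i). -/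
def Cpoly : Polynomial DH := X^2 + 1 - C (ε * inl qj) * X - C (ε * inl qi)

theorem X_sub_C_mul_X_sub_C {R : Type*} [Ring R] (a b : R) :
    (X - C a) * (X - C b) = X ^ 2 - C (a + b) * X + C (a * b) := by
  rw [sub_mul, mul_sub, mul_sub, (commute_X (C b)).eq, C_add, C_mul]
  noncomm_ring

theorem DualNumber.inl_add_eps_mul_inl_mul {R : Type*} [Semiring R] (a b c d : R) :
    (inl a + DualNumber.eps * inl b : DualNumber R) * (inl c + DualNumber.eps * inl d) =
      inl (a * c) + DualNumber.eps * inl (a * d + b * c) := by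
  ext <;> simp

section QuaternionUnits

open Quaternion

theorem qk_mul_qk : qk * qk = -1 := by
  rw [Quaternion.ext_iff]
  simp only [re_mul, imI_mul, imJ_mul, imK_mul, re_neg, imI_neg, imJ_neg, imK_neg]
  simp [qk]

theorem qk_mul_qi : qk * qi = qj := by
  rw [Quaternion.ext_iff]
  simp only [re_mul, imI_mul, imJ_mul, imK_mul]
  simp [qi, qj, qk]

theorem qk_mul_qj : qk * qj = -qi := by
  rw [Quaternion.ext_iff]
  simp only [re_mul, imI_mul, imJ_mul, imK_mul, re_neg, imI_neg, imJ_neg, imK_neg]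
  simp [qi, qj, qk]

theorem qi_mul_qk : qi * qk = -qj := by
  rw [Quaternion.ext_iff]
  simp only [re_mul, imI_mul, imJ_mul, imK_mul, re_neg, imI_neg, imJ_neg, imK_neg]
  simp [qi, qj, qk]

theorem qj_mul_qk : qj * qk = qi := by
  rw [Quaternion.ext_iff]
  simp only [re_mul, imI_mul, imJ_mul, imK_mul]
  simp [qi, qj, qk]

end QuaternionUnits

/-- for every (λ, μ) ∈ ℝ², the identity
C = (t - k - ε((1-μ)j - λi)) · (t + k - ε(λi + μj)) holds, so C admits a
two-parameter family of factorizations into linear factors. -/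
theorem circular_translation_factorizations (l m : ℝ) :
    Cpoly =
      (X - C (TrivSqZeroExt.inl qk + ε * TrivSqZeroExt.inl ((1 - m) • qj - l • qi))) *
      (X - C (-TrivSqZeroExt.inl qk + ε * TrivSqZeroExt.inl (l • qi + m • qj))) := by
  have hsum : (inl qk + ε * inl ((1 - m) • qj - l • qi) : DH) +
      (-inl qk + ε * inl (l • qi + m • qj)) = ε * inl qj := by
    rw [add_add_add_comm, add_neg_cancel, zero_add, ← mul_add, ← inl_add]
    congr 2
    module
  have hdualPart : qk * (l • qi + m • qj) + ((1 - m) • qj - l • qi) * -qk = -qi := by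
    simp only [mul_add, mul_smul_comm, sub_mul, smul_mul_assoc, mul_neg, qk_mul_qi, qk_mul_qj,
      qi_mul_qk, qj_mul_qk]
    module
  have hprod : (inl qk + ε * inl ((1 - m) • qj - l • qi) : DH) *
      (-inl qk + ε * inl (l • qi + m • qj)) = 1 - ε * inl qi := by
    rw [← inl_neg, ε, DualNumber.inl_add_eps_mul_inl_mul, hdualPart, mul_neg, qk_mul_qk, neg_neg,
      inl_one, inl_neg, mul_neg, ← sub_eq_add_neg]
  rw [X_sub_C_mul_X_sub_C, hsum, hprod, Cpoly, C_sub, C_1]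
  abel
end
end

section
/- Let h₂ ∈ DH satisfy the three conditions: (a) r₁h₂ + r₀ = 0 with r₁ = -εj, r₀ = -εi (i.e., εj·h₂ = -εi), (b) h₂² + 1 = 0, and (c) h₂h̃₂, h̃₂h₂, h₂ + h̃₂ are all real. Then h₂ = -k + λεi + μεj for some real λ, μ. -/
open Polynomial TrivSqZeroExt

noncomputable section

/-- any h₂ ∈ DH with r₁h₂ + r₀ = 0 (r₁ = -εj, r₀ = -εi), h₂² + 1 = 0,
and h₂h̃₂, h̃₂h₂, h₂ + h̃₂ real, is of the form h₂ = -k + λεi + μεj. -/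
theorem circular_translation_right_zeros (h₂ : DH)
    (hR : (-(ε * inl qj)) * h₂ + (-(ε * inl qi)) = 0)
    (hM : h₂ ^ 2 + 1 = 0)
    (hr1 : ∃ r : ℝ, h₂ * dconj h₂ = algebraMap ℝ DH r)
    (hr2 : ∃ r : ℝ, dconj h₂ * h₂ = algebraMap ℝ DH r)
    (hr3 : ∃ r : ℝ, h₂ + dconj h₂ = algebraMap ℝ DH r) :
    ∃ l m : ℝ, h₂ = -inl qk + l • (ε * inl qi) + m • (ε * inl qj) := by
  set a := h₂.fst with ha
  set b := h₂.snd with hb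
  have h1 : -(qj * a) + -qi = 0 := by
    have := congrArg TrivSqZeroExt.snd hR
    simpa [ε, mul_comm] using this
  have ha' : a = -qk := by
    have h2 := Quaternion.ext_iff.mp h1
    simp [Quaternion.re_mul, Quaternion.imI_mul, Quaternion.imJ_mul,
      Quaternion.imK_mul, Quaternion.re_zero, Quaternion.imI_zero, Quaternion.imJ_zero,
      Quaternion.imK_zero] at h2
    simp [qi, qj] at h2
    ext <;> simp <;> simp [qk] <;> linarith [h2.1, h2.2.1, h2.2.2.1, h2.2.2.2]
  have h3 : a * b + b * a = 0 := by
    have := congrArg TrivSqZeroExt.snd hM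
    simpa [pow_two] using this
  have h4 : b.re = 0 ∧ b.imK = 0 := by
    rw [ha'] at h3
    have h2 := Quaternion.ext_iff.mp h3
    simp [Quaternion.re_mul, Quaternion.imI_mul, Quaternion.imJ_mul,
      Quaternion.imK_mul, Quaternion.re_zero, Quaternion.imI_zero, Quaternion.imJ_zero,
      Quaternion.imK_zero] at h2
    simp [qk] at h2
    obtain ⟨p, q⟩ := h2
    exact ⟨q, p⟩
  refine ⟨b.imI, b.imJ, ?_⟩
  have : h₂ = TrivSqZeroExt.inl a + TrivSqZeroExt.inr b := by
    ext <;> simp [ha, hb]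
  rw [this, ha']
  apply TrivSqZeroExt.ext
  · simp [ε]
  · simp [ε]
    ext <;> simp [h4.1, h4.2] <;> simp [qi, qj]
end
end

section
/- Let x, y, z be real numbers with x² + y² + (z - 1/4)² = 1/16, and set h₂ = e₁e₂ + 2x(e₁e₊ - e₂e₃) + 2y(e₂e₊ + e₁e₃) + 2z(e₃e₊ - e₁e₂) in CGA. Then h₂² + 1 = 0. -/
/-!
Written in the basis `eᵢeⱼ`, `h₂` is a bivector `F` of the Euclidean subspace spanned by
`e₁, e₂, e₃, e₊`, and any such bivector satisfies `F² = -|F|² + 2 Pf(F) e₁e₂e₃e₊`. On the sphere,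
i.e. `x² + y² + z² = z / 2`, one finds `|F|² = 1 - 4z + 8(x² + y² + z²) = 1` and
`Pf(F) = 2z - 4(x² + y² + z²) = 0`.
-/

open CliffordAlgebra Polynomial

noncomputable section

/-- The quadratic form of signature (4,1) on ℝ⁵. -/
def Qf : QuadraticForm ℝ (Fin 5 → ℝ) := QuadraticMap.weightedSumSquares ℝ ![1,1,1,1,-1]

/-- Conformal geometric algebra of ℝ^{4,1}. -/
abbrev CGA := CliffordAlgebra Qf

/-- The orthonormal generators e₁, e₂, e₃, e₊, e₋ (indices 0,1,2,3,4). -/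
def e (a : Fin 5) : CGA := ι Qf (Pi.single a 1)

namespace QuadraticMap

variable {ι R S : Type*} [Fintype ι] [DecidableEq ι] [CommRing R] [Monoid S]
  [DistribMulAction S R] [SMulCommClass S R R]

theorem weightedSumSquares_single (w : ι → S) (a : ι) :
    weightedSumSquares R w (Pi.single a 1) = w a • 1 := by
  simp [weightedSumSquares_apply, Pi.single_apply]

theorem isOrtho_weightedSumSquares_single (w : ι → S) {a b : ι} (hab : a ≠ b) :
    (weightedSumSquares R w).IsOrtho (Pi.single a 1) (Pi.single b 1) := by
  rw [isOrtho_def, weightedSumSquares_apply, weightedSumSquares_apply, weightedSumSquares_apply,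
    ← Finset.sum_add_distrib]
  refine Finset.sum_congr rfl fun i _ => ?_
  rcases eq_or_ne i a with rfl | hia
  · simp [hab]
  · simp [hia]

end QuadraticMap

section Bivector

variable {R A : Type*} [CommRing R] [Ring A] [Algebra R A] {u : Fin 4 → A}

theorem bivector_sq (hsq : ∀ i, u i * u i = 1) (hanti : ∀ i j, i ≠ j → u i * u j = -(u j * u i))
    (a b c d f g : R) :
    (a • (u 0 * u 1) + b • (u 0 * u 2) + c • (u 0 * u 3) + d • (u 1 * u 2) + f • (u 1 * u 3)
        + g • (u 2 * u 3)) ^ 2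
      = (2 * (a * g - b * f + c * d)) • (u 0 * u 1 * u 2 * u 3)
        - (a ^ 2 + b ^ 2 + c ^ 2 + d ^ 2 + f ^ 2 + g ^ 2) • 1 := by
  have sq' : ∀ i x, u i * (u i * x) = x := fun i x => by rw [← mul_assoc, hsq, one_mul]
  have swap : ∀ i j, i < j → u j * u i = -(u i * u j) := fun i j h => hanti j i h.ne'
  have swap' : ∀ i j, i < j → ∀ x, u j * (u i * x) = -(u i * (u j * x)) := fun i j h x => by
    rw [← mul_assoc, swap i j h, neg_mul, mul_assoc]
  simp (disch := decide) only [pow_two, mul_add, add_mul, smul_mul_assoc, mul_smul_comm, mul_assoc,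
    mul_neg, neg_neg, smul_neg, sq', hsq, swap, swap', mul_one]
  match_scalars <;> ring

end Bivector

theorem e_mul_self (a : Fin 5) : e a * e a = ((![1, 1, 1, 1, -1] : Fin 5 → ℤ) a : CGA) := by
  rw [e, ι_sq_scalar]
  unfold Qf
  rw [QuadraticMap.weightedSumSquares_single, zsmul_one, map_intCast]
  rfl

theorem e_mul_e_comm {a b : Fin 5} (hab : a ≠ b) : e a * e b = -(e b * e a) :=
  ι_mul_ι_comm_of_isOrtho (QuadraticMap.isOrtho_weightedSumSquares_single _ hab)

/-- if x² + y² + (z - 1/4)² = 1/16 then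
h₂ = e₁e₂ + 2x(e₁e₊-e₂e₃) + 2y(e₂e₊+e₁e₃) + 2z(e₃e₊-e₁e₂) satisfies h₂² + 1 = 0. -/
theorem h2_squares_to_minus_one (x y z : ℝ)
    (hs : x^2 + y^2 + (z - 1/4)^2 = 1/16) :
    (e 0 * e 1 + (2*x) • (e 0 * e 3 - e 1 * e 2) + (2*y) • (e 1 * e 3 + e 0 * e 2)
      + (2*z) • (e 2 * e 3 - e 0 * e 1))^2 + 1 = 0 := by
  let u : Fin 4 → CGA := fun i => e i.castSucc
  have hsq : ∀ i, u i * u i = 1 := by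
    intro i
    fin_cases i <;> simp [u, e_mul_self]
  have hanti : ∀ i j, i ≠ j → u i * u j = -(u j * u i) := fun i j hij =>
    e_mul_e_comm (Fin.castSucc_injective _ |>.ne hij)
  have h₂ : e 0 * e 1 + (2*x) • (e 0 * e 3 - e 1 * e 2) + (2*y) • (e 1 * e 3 + e 0 * e 2)
      + (2*z) • (e 2 * e 3 - e 0 * e 1) = (1 - 2*z) • (u 0 * u 1) + (2*y) • (u 0 * u 2)
      + (2*x) • (u 0 * u 3) + (-2*x) • (u 1 * u 2) + (2*y) • (u 1 * u 3) + (2*z) • (u 2 * u 3) := by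
    simp only [u, Fin.reduceCastSucc]
    module
  have pfaffian : 2 * ((1 - 2*z) * (2*z) - 2*y * (2*y) + 2*x * (-2*x)) = 0 := by
    linear_combination (-8) * hs
  have norm_sq : (1 - 2*z)^2 + (2*y)^2 + (2*x)^2 + (-2*x)^2 + (2*y)^2 + (2*z)^2 = 1 := by
    linear_combination 8 * hs
  rw [h₂, bivector_sq hsq hanti, pfaffian, norm_sq, zero_smul, one_smul, zero_sub, neg_add_cancel]
end
end

section
/- Let x, y, z be real numbers with x² + y² + (z - 1/4)² = 1/16, let m = (1/2)(e₁e₂ + e₃e₊), let h₂ = e₁e₂ + 2x(e₁e₊-e₂e₃) + 2y(e₂e₊+e₁e₃) + 2z(e₃e₊-e₁e₂), and define h₁ = 2m - h₂. Then (t - h₁)(t - h₂) = t² - t(e₁e₂ + e₃e₊) + e₁e₂e₃e₊, i.e., h₁ and h₂ give a factorization of the Villarceau motion polynomial C. -/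
open CliffordAlgebra Polynomial

noncomputable section

def h₂ (x y z : ℝ) : CGA :=
  e 0 * e 1 + (2*x) • (e 0 * e 3 - e 1 * e 2) + (2*y) • (e 1 * e 3 + e 0 * e 2)
    + (2*z) • (e 2 * e 3 - e 0 * e 1)

/-- h₁ = m - S/4 = 2m - h₂ with m = (e₁e₂ + e₃e₊)/2. -/
def h₁ (x y z : ℝ) : CGA := (e 0 * e 1 + e 2 * e 3) - h₂ x y z

lemma Qf_apply (v : Fin 5 → ℝ) :
    Qf v = v 0 * v 0 + v 1 * v 1 + v 2 * v 2 + v 3 * v 3 - v 4 * v 4 := by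
  simp [Qf, QuadraticMap.weightedSumSquares_apply, Fin.sum_univ_five]; ring

lemma e_sq (a : Fin 5) (h : a ≠ 4) : e a * e a = 1 := by
  rw [e, ι_sq_scalar, Qf_apply]
  fin_cases a <;> simp_all [Pi.single_apply]

lemma e_swap (a b : Fin 5) (h : a ≠ b) : e a * e b = -(e b * e a) := by
  have key := ι_mul_ι_add_swap (Q := Qf) (Pi.single a 1) (Pi.single b 1)
  have hp : QuadraticMap.polar Qf (Pi.single a 1) (Pi.single b 1) = 0 := by
    rw [QuadraticMap.polar, Qf_apply, Qf_apply, Qf_apply]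
    simp [Pi.single_apply, Pi.add_apply]
    fin_cases a <;> fin_cases b <;> simp_all
  rw [hp, map_zero] at key
  simpa [e] using eq_neg_of_add_eq_zero_left key

lemma e_swap' (a b : Fin 5) (h : a ≠ b) (v : CGA) :
    e a * (e b * v) = -(e b * (e a * v)) := by
  rw [← mul_assoc, e_swap a b h, neg_mul, mul_assoc]

lemma e_sq' (a : Fin 5) (h : a ≠ 4) (v : CGA) : e a * (e a * v) = v := by
  rw [← mul_assoc, e_sq a h, one_mul]

lemma s10 : e 1 * e 0 = -(e 0 * e 1) := e_swap 1 0 (by decide)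
lemma s20 : e 2 * e 0 = -(e 0 * e 2) := e_swap 2 0 (by decide)
lemma s21 : e 2 * e 1 = -(e 1 * e 2) := e_swap 2 1 (by decide)
lemma s30 : e 3 * e 0 = -(e 0 * e 3) := e_swap 3 0 (by decide)
lemma s31 : e 3 * e 1 = -(e 1 * e 3) := e_swap 3 1 (by decide)
lemma s32 : e 3 * e 2 = -(e 2 * e 3) := e_swap 3 2 (by decide)
lemma s10' (v : CGA) : e 1 * (e 0 * v) = -(e 0 * (e 1 * v)) := e_swap' 1 0 (by decide) v
lemma s20' (v : CGA) : e 2 * (e 0 * v) = -(e 0 * (e 2 * v)) := e_swap' 2 0 (by decide) v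
lemma s21' (v : CGA) : e 2 * (e 1 * v) = -(e 1 * (e 2 * v)) := e_swap' 2 1 (by decide) v
lemma s30' (v : CGA) : e 3 * (e 0 * v) = -(e 0 * (e 3 * v)) := e_swap' 3 0 (by decide) v
lemma s31' (v : CGA) : e 3 * (e 1 * v) = -(e 1 * (e 3 * v)) := e_swap' 3 1 (by decide) v
lemma s32' (v : CGA) : e 3 * (e 2 * v) = -(e 2 * (e 3 * v)) := e_swap' 3 2 (by decide) v
lemma q0 : e 0 * e 0 = 1 := e_sq 0 (by decide)
lemma q1 : e 1 * e 1 = 1 := e_sq 1 (by decide)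
lemma q2 : e 2 * e 2 = 1 := e_sq 2 (by decide)
lemma q3 : e 3 * e 3 = 1 := e_sq 3 (by decide)
lemma q0' (v : CGA) : e 0 * (e 0 * v) = v := e_sq' 0 (by decide) v
lemma q1' (v : CGA) : e 1 * (e 1 * v) = v := e_sq' 1 (by decide) v
lemma q2' (v : CGA) : e 2 * (e 2 * v) = v := e_sq' 2 (by decide) v
lemma q3' (v : CGA) : e 3 * (e 3 * v) = v := e_sq' 3 (by decide) v

lemma h_prod (x y z : ℝ) :
    h₁ x y z * h₂ x y z
      = (8*(x^2+y^2+z^2) - 4*z) • (1 + e 0 * e 1 * e 2 * e 3) + e 0 * e 1 * e 2 * e 3 := by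
  simp only [h₁, h₂, sub_mul, mul_sub, add_mul, mul_add, smul_mul_assoc, mul_smul_comm,
    smul_sub, smul_add, smul_smul, mul_assoc,
    s10, s20, s21, s30, s31, s32, s10', s20', s21', s30', s31', s32',
    q0, q1, q2, q3, q0', q1', q2', q3',
    mul_neg, neg_mul, neg_neg, mul_one, one_mul, smul_neg, neg_smul, sub_neg_eq_add]
  module

lemma poly_fac {R : Type*} [Ring R] (a b : R) :
    (X - C a) * (X - C b) = X^2 - C (a + b) * X + C (a * b) := by
  rw [sub_mul, mul_sub, mul_sub, X_mul_C, map_add, map_mul]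
  noncomm_ring

/-- for x² + y² + (z-1/4)² = 1/16,
(t - h₁)(t - h₂) = t² - t(e₁e₂ + e₃e₊) + e₁e₂e₃e₊, a factorization of the Villarceau
motion polynomial. -/
theorem villarceau_factorization (x y z : ℝ)
    (hs : x^2 + y^2 + (z - 1/4)^2 = 1/16) :
    (X - C (h₁ x y z)) * (X - C (h₂ x y z))
      = X^2 - C (e 0 * e 1 + e 2 * e 3) * X + C (e 0 * e 1 * e 2 * e 3) := by
  have key : (8*(x^2+y^2+z^2) - 4*z : ℝ) = 0 := by linear_combination 8*hs
  have hsum : h₁ x y z + h₂ x y z = e 0 * e 1 + e 2 * e 3 := sub_add_cancel _ _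
  have hprod : h₁ x y z * h₂ x y z = e 0 * e 1 * e 2 * e 3 := by
    rw [h_prod, key, zero_smul, zero_add]
  rw [poly_fac, hsum, hprod]
end
end
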